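/- arXiv:2505.03396 — 5 statements merged into one kernel-verified Lean document; each statement's English description precedes it below -/
import Mathlib

section
/- Let λ ∈ (0,1], A ∈ (0,1], and let (a_n), (b_n) be sequences of positive reals with b_n ≥ A^{2ⁿ} for all n, a₀ ≥ b₀, a₁ ≥ b₁, and a_n ≥ λⁿ · (min(a_{n−1}, b_{n−1}))² for all n ≥ 1. Then a_n ≥ λ^{2^{n+1}} · A^{2ⁿ} for all n ≥ 1; in particular min(a_n, b_n) ≥ (λ² A)^{2ⁿ}. -/
/-!
The exponent `e n = 2 ^ (n + 1) - (n + 2)` satisfies `e (n + 1) = 2 e n + (n + 1)`, which is exactly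
how the recursion `a (n + 1) ≥ λ ^ (n + 1) · min (a n) (b n) ^ 2` transforms exponents. Hence
`λ ^ e n · A ^ 2 ^ n ≤ min (a n) (b n)` propagates by induction from `n = 0`, the bound on `b` being
preserved because `λ ≤ 1`. Since `e n ≤ 2 ^ (n + 1)`, the claimed bound `(λ ^ 2 A) ^ 2 ^ n` follows.
-/

lemma add_two_mul_two_pow_sub (n : ℕ) :
    (n + 1) + 2 * (2 ^ (n + 1) - (n + 2)) = 2 ^ (n + 2) - (n + 3) := by
  have := Nat.lt_two_pow_self (n := n + 1)
  rw [pow_succ 2 (n + 1)]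
  omega

theorem pow_mul_pow_two_pow_le_min {lam A : ℝ} (hlam0 : 0 ≤ lam) (hlam1 : lam ≤ 1) (hA : 0 ≤ A)
    {a b : ℕ → ℝ} (hbA : ∀ n, A ^ 2 ^ n ≤ b n) (h0 : b 0 ≤ a 0)
    (hrec : ∀ n, lam ^ (n + 1) * min (a n) (b n) ^ 2 ≤ a (n + 1)) (n : ℕ) :
    lam ^ (2 ^ (n + 1) - (n + 2)) * A ^ 2 ^ n ≤ min (a n) (b n) := by
  induction n with
  | zero => simpa [min_eq_right h0] using hbA 0
  | succ n ih =>
    have hb : lam ^ (2 ^ (n + 2) - (n + 3)) * A ^ 2 ^ (n + 1) ≤ b (n + 1) :=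
      (mul_le_of_le_one_left (by positivity) (pow_le_one₀ hlam0 hlam1)).trans (hbA _)
    have ha : lam ^ (2 ^ (n + 2) - (n + 3)) * A ^ 2 ^ (n + 1) ≤ a (n + 1) :=
      calc lam ^ (2 ^ (n + 2) - (n + 3)) * A ^ 2 ^ (n + 1)
          = lam ^ (n + 1) * (lam ^ (2 ^ (n + 1) - (n + 2)) * A ^ 2 ^ n) ^ 2 := by
            rw [← add_two_mul_two_pow_sub, pow_succ 2 n]
            ring
        _ ≤ lam ^ (n + 1) * min (a n) (b n) ^ 2 := by gcongr
        _ ≤ a (n + 1) := hrec n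
    exact le_min ha hb

theorem stmt9_general (lam A : ℝ) (hlam0 : 0 < lam) (hlam1 : lam ≤ 1)
    (hA0 : 0 < A)
    (a b : ℕ → ℝ)
    (hbA : ∀ n, A^(2^n) ≤ b n)
    (h0 : b 0 ≤ a 0)
    (hrec : ∀ n, 1 ≤ n → lam^n * (min (a (n-1)) (b (n-1)))^2 ≤ a n) :
    ∀ n, 1 ≤ n → lam^(2^(n+1)) * A^(2^n) ≤ a n ∧
      (lam^2 * A)^(2^n) ≤ min (a n) (b n) := by
  intro n _
  have hpow : (lam ^ 2 * A) ^ 2 ^ n = lam ^ 2 ^ (n + 1) * A ^ 2 ^ n := by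
    rw [mul_pow, ← pow_mul, pow_succ' 2 n]
  have hmin : lam ^ 2 ^ (n + 1) * A ^ 2 ^ n ≤ min (a n) (b n) :=
    calc lam ^ 2 ^ (n + 1) * A ^ 2 ^ n ≤ lam ^ (2 ^ (n + 1) - (n + 2)) * A ^ 2 ^ n := by
          gcongr ?_ * _
          exact pow_le_pow_of_le_one hlam0.le hlam1 (Nat.sub_le _ _)
      _ ≤ min (a n) (b n) :=
          pow_mul_pow_two_pow_le_min hlam0.le hlam1 hA0.le hbA h0
            (fun k => hrec (k + 1) (Nat.le_add_left 1 k)) n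
  exact ⟨hmin.trans (min_le_left _ _), hpow ▸ hmin⟩

/-- Final iteration argument of Section 4: if `b_n ≥ A^{2ⁿ}`, `a₀ ≥ b₀`,
`a₁ ≥ b₁` and `a_n ≥ λⁿ (min(a_{n−1}, b_{n−1}))²`, then
`a_n ≥ λ^{2^{n+1}} A^{2ⁿ}` for `n ≥ 1`, and `min(a_n, b_n) ≥ (λ²A)^{2ⁿ}`. -/
theorem stmt9 (lam A : ℝ) (hlam0 : 0 < lam) (hlam1 : lam ≤ 1)
    (hA0 : 0 < A) (hA1 : A ≤ 1)
    (a b : ℕ → ℝ) (ha : ∀ n, 0 < a n) (hb : ∀ n, 0 < b n)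
    (hbA : ∀ n, A^(2^n) ≤ b n)
    (h0 : b 0 ≤ a 0) (h1 : b 1 ≤ a 1)
    (hrec : ∀ n, 1 ≤ n → lam^n * (min (a (n-1)) (b (n-1)))^2 ≤ a n) :
    ∀ n, 1 ≤ n → lam^(2^(n+1)) * A^(2^n) ≤ a n ∧
      (lam^2 * A)^(2^n) ≤ min (a n) (b n) :=
  stmt9_general lam A hlam0 hlam1 hA0 a b hbA h0 hrec
end

section
/- Let Ω ⊆ ℝ³ be open and bounded satisfying the uniform interior sphere condition with radius 1/(2C̃): for every boundary point y there is a ball of radius 1/(2C̃) contained in Ω tangent to ∂Ω at y. Let y ∈ ∂Ω, w ∈ ℝ³ with n(y)·w < 0, and set sin θ_w := |n(y)·w|/|w|. Then for all 0 ≤ s ≤ sin θ_w/(2C̃|w|): d(y + s w, ∂Ω) ≥ (s sin θ_w / 2)|w|. -/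
open scoped RealInnerProductSpace

/-- Inequality (2025/08/19 05:40): under the uniform interior sphere condition
of radius `1/(2C̃)` at the boundary point `y` with outward unit normal `n`, for
`w` with `n·w < 0` and `sin θ_w = |n·w|/|w|`, the point `y + s w` is at distance
at least `(s sin θ_w / 2)|w|` from `∂Ω` for `0 ≤ s ≤ sin θ_w/(2C̃|w|)`. -/
theorem stmt12 (Ω : Set (EuclideanSpace ℝ (Fin 3))) (hΩ : IsOpen Ω)
    (C : ℝ) (hC : 0 < C)
    (y n w : EuclideanSpace ℝ (Fin 3))
    (hy : y ∈ frontier Ω) (hn : ‖n‖ = 1) (hw : ⟪n, w⟫ < (0:ℝ))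
    (hball : Metric.ball (y - (1/(2*C)) • n) (1/(2*C)) ⊆ Ω)
    (s : ℝ) (hs0 : 0 ≤ s)
    (hs : s ≤ (|⟪n, w⟫| / ‖w‖) / (2 * C * ‖w‖)) :
    (s * (|⟪n, w⟫| / ‖w‖) / 2) * ‖w‖ ≤ Metric.infDist (y + s • w) (frontier Ω) := by
  have hw0 : w ≠ 0 := by
    intro h
    rw [h, inner_zero_right] at hw
    exact lt_irrefl 0 hw
  have hwn : (0:ℝ) < ‖w‖ := norm_pos_iff.mpr hw0
  set r : ℝ := 1/(2*C) with hr
  have hrpos : 0 < r := by positivity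
  set a : ℝ := |⟪n, w⟫| with ha
  have ha' : a = -⟪n, w⟫ := abs_of_neg hw
  have hapos : 0 < a := by rw [ha']; linarith
  have haw : a ≤ ‖w‖ := by
    calc a ≤ ‖n‖ * ‖w‖ := abs_real_inner_le_norm n w
    _ = ‖w‖ := by rw [hn, one_mul]
  have hsa : s * ‖w‖^2 ≤ r * a := by
    have h2 : (a/‖w‖/(2*C*‖w‖)) * ‖w‖^2 = r * a := by
      rw [hr]; field_simp
    nlinarith [mul_le_mul_of_nonneg_right hs (sq_nonneg ‖w‖)]
  have hwn2 : (0:ℝ) < ‖w‖^2 := by positivity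
  have h3 : s * a * ‖w‖^2 ≤ r * ‖w‖^2 := by
    nlinarith [mul_le_mul_of_nonneg_right hsa hapos.le,
      mul_le_mul_of_nonneg_left (mul_self_le_mul_self hapos.le haw) hrpos.le]
  have hsar : s * a ≤ r := by nlinarith [h3, hwn2]
  have hkey : s * a / 2 ≤ r - s * a / 2 := by linarith
  have hrs : 0 < r - s * a / 2 := by nlinarith
  have hdist : dist (y + s • w) (y - r • n) = ‖s • w + r • n‖ := by
    rw [dist_eq_norm]
    congr 1
    abel
  have hsq : ‖s • w + r • n‖^2 = s^2 * ‖w‖^2 + 2 * s * r * ⟪w, n⟫ + r^2 := by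
    rw [@norm_add_sq_real, norm_smul, norm_smul, real_inner_smul_left,
      real_inner_smul_right, hn, Real.norm_eq_abs, Real.norm_eq_abs,
      abs_of_nonneg hs0, abs_of_pos hrpos]
    ring
  have hwn' : ⟪w, n⟫ = -a := by rw [real_inner_comm]; linarith [ha']
  have hsq2 : ‖s • w + r • n‖^2 ≤ (r - s * a / 2)^2 := by
    rw [hsq, hwn']
    nlinarith [mul_le_mul_of_nonneg_left hsa hs0, sq_nonneg (s*a)]
  have hnle : ‖s • w + r • n‖ ≤ r - s * a / 2 := by
    nlinarith [hsq2, norm_nonneg (s • w + r • n), hrs]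
  have hfr : ∀ z ∈ frontier Ω, r ≤ dist z (y - r • n) := by
    intro z hz
    by_contra hlt
    push_neg at hlt
    have hzΩ : z ∈ Ω := hball (by rwa [Metric.mem_ball])
    rw [hΩ.frontier_eq] at hz
    exact hz.2 hzΩ
  have hne : (frontier Ω).Nonempty := ⟨y, hy⟩
  have hgoal : s * a / 2 ≤ Metric.infDist (y + s • w) (frontier Ω) := by
    rw [← not_lt]
    intro hlt
    obtain ⟨z, hz, hzd⟩ := (Metric.infDist_lt_iff hne).mp hlt
    have h1 := hfr z hz
    have h2 : dist z (y - r • n) ≤ dist z (y + s • w) + dist (y + s • w) (y - r • n) :=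
      dist_triangle _ _ _
    rw [hdist] at h2
    rw [dist_comm] at hzd
    linarith
  have heq : (s * (a / ‖w‖) / 2) * ‖w‖ = s * a / 2 := by field_simp
  calc (s * (|⟪n, w⟫| / ‖w‖) / 2) * ‖w‖ = s * a / 2 := heq
  _ ≤ _ := hgoal
end

section
/- Let Ω ⊆ ℝ³ satisfy the uniform interior sphere condition with radius 1/(2C̃). If a straight-line trajectory starting at a boundary point x ∈ ∂Ω with velocity v (with v entering Ω, sin θ := |n(x)·v|/|v| > 0) remains in Ω̄, then the trajectory cannot hit ∂Ω again before time sin θ/(C̃ |v|); i.e. x + s v ∈ Ω for all 0 < s < sin θ/(C̃|v|). -/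
open scoped RealInnerProductSpace

/-- Estimate (2025/08/19 04:34): under the uniform interior sphere condition of
radius `1/(2C̃)` at the boundary point `x`, a straight-line trajectory entering
`Ω` with velocity `v` (with `sin θ = |n·v|/|v|`) which stays in `Ω̄` cannot hit
`∂Ω` again before time `sin θ/(C̃|v|)`: `x + s v ∈ Ω` for `0 < s < sin θ/(C̃|v|)`. -/
theorem stmt13 (Ω : Set (EuclideanSpace ℝ (Fin 3))) (hΩ : IsOpen Ω)
    (C : ℝ) (hC : 0 < C)
    (x n v : EuclideanSpace ℝ (Fin 3))
    (hx : x ∈ frontier Ω) (hn : ‖n‖ = 1) (hv : ⟪n, v⟫ < (0:ℝ))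
    (hball : Metric.ball (x - (1/(2*C)) • n) (1/(2*C)) ⊆ Ω)
    (hstay : ∀ s : ℝ, 0 ≤ s → s ≤ (|⟪n, v⟫| / ‖v‖) / (C * ‖v‖) →
      x + s • v ∈ closure Ω) :
    ∀ s : ℝ, 0 < s → s < (|⟪n, v⟫| / ‖v‖) / (C * ‖v‖) → x + s • v ∈ Ω := by
  intro s hs hs'
  have hvne : v ≠ 0 := by
    intro h; rw [h, inner_zero_right] at hv; exact lt_irrefl 0 hv
  have hvpos : (0:ℝ) < ‖v‖ := norm_pos_iff.mpr hvne
  set r : ℝ := 1/(2*C) with hr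
  have hrpos : 0 < r := by positivity
  apply hball
  rw [Metric.mem_ball]
  have hdist : dist (x + s • v) (x - r • n) = ‖s • v + r • n‖ := by
    rw [dist_eq_norm]
    congr 1
    abel
  rw [hdist]
  have habs : |⟪n, v⟫| = -⟪n, v⟫ := abs_of_neg hv
  -- from hs' : s < (-⟪n,v⟫/‖v‖)/(C*‖v‖), deduce s * C * ‖v‖^2 < -⟪n,v⟫
  have key : s * (C * ‖v‖ ^ 2) < -⟪n, v⟫ := by
    rw [habs] at hs'
    have h1 : s * (C * ‖v‖) < -⟪n, v⟫ / ‖v‖ := by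
      have := (lt_div_iff₀ (by positivity : (0:ℝ) < C * ‖v‖)).mp hs'
      linarith
    have h2 : s * (C * ‖v‖) * ‖v‖ < -⟪n, v⟫ := by
      have := mul_lt_mul_of_pos_right h1 hvpos
      rwa [div_mul_cancel₀ _ (ne_of_gt hvpos)] at this
    calc s * (C * ‖v‖ ^ 2) = s * (C * ‖v‖) * ‖v‖ := by ring
      _ < -⟪n, v⟫ := h2
  have hsq : ‖s • v + r • n‖ ^ 2 < r ^ 2 := by
    rw [norm_add_sq_real, real_inner_smul_left, real_inner_smul_right,
      norm_smul, norm_smul, hn]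
    have hnv : ⟪v, n⟫ = ⟪n, v⟫ := (real_inner_comm v n).symm
    rw [hnv]
    have hrC : 2 * r * C = 1 := by
      rw [hr]; field_simp
    have hns : ‖s‖ = s := abs_of_pos hs
    have hnr : ‖r‖ = r := abs_of_pos hrpos
    rw [hns, hnr]
    nlinarith [mul_lt_mul_of_pos_left key (by positivity : (0:ℝ) < 2 * s * r), hrC,
      mul_pos hs hrpos, sq_nonneg (s * ‖v‖)]
  nlinarith [norm_nonneg (s • v + r • n), hrpos, hsq]
end

section
/- Let S be a finite subset of a path-connected compact metric subset K of ℝ³, w₁ ∈ S. Suppose: (a) every point of K is within distance d/16 of some point of S; (b) whenever z, w ∈ S satisfy |z − w| ≤ 31d/240, z and w are 'connected' (d-relation). Let O(w₁) be the set of points of S reachable from w₁ by chains of connected pairs. If K ⊄ B(O(w₁), d/16), then picking a continuous path from w₁ to a far point and a crossing time yields w₃ ∈ K with d/16 ≤ d(O(w₁), w₃) ≤ d/15, and then (a)+(b) produce a contradiction. Hence K ⊆ B(O(w₁), d/16) and S ⊆ O(w₁): any two points of S are connected by a chain. -/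
/-- Connectivity/chain argument of Lemma 2.4: if `S` is a finite `d/16`-net of a
path-connected compact set `K ⊆ ℝ³`, and any two points of `S` at distance at
most `31d/240` are related, then `K` is covered by the `d/16`-balls around the
points of `S` reachable from `w₁` by chains, and every point of `S` is reachable
from `w₁` by a chain of related pairs within `S`. -/
theorem stmt17 (K S : Set (EuclideanSpace ℝ (Fin 3)))
    (hK : IsCompact K) (hKpath : IsPathConnected K)
    (hSfin : S.Finite) (hSK : S ⊆ K)
    (w₁ : EuclideanSpace ℝ (Fin 3)) (hw₁ : w₁ ∈ S)
    (d : ℝ) (hd : 0 < d)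
    (rel : EuclideanSpace ℝ (Fin 3) → EuclideanSpace ℝ (Fin 3) → Prop)
    (ha : ∀ x ∈ K, ∃ s ∈ S, dist x s < d/16)
    (hb : ∀ z ∈ S, ∀ w ∈ S, dist z w ≤ 31*d/240 → rel z w) :
    (K ⊆ ⋃ y ∈ {y ∈ S |
        Relation.ReflTransGen (fun a b => a ∈ S ∧ b ∈ S ∧ rel a b) w₁ y},
      Metric.ball y (d/16)) ∧
    ∀ w ∈ S, Relation.ReflTransGen (fun a b => a ∈ S ∧ b ∈ S ∧ rel a b) w₁ w := by
  set R : EuclideanSpace ℝ (Fin 3) → EuclideanSpace ℝ (Fin 3) → Prop :=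
    fun a b => a ∈ S ∧ b ∈ S ∧ rel a b with hR
  set O : Set (EuclideanSpace ℝ (Fin 3)) :=
    {y ∈ S | Relation.ReflTransGen R w₁ y} with hOdef
  set U : Set (EuclideanSpace ℝ (Fin 3)) := ⋃ y ∈ O, Metric.ball y (d/16) with hUdef
  have hUopen : IsOpen U := isOpen_biUnion (fun _ _ => Metric.isOpen_ball)
  have hclos : K ∩ closure U ⊆ U := by
    rintro x ⟨hxK, hxcl⟩
    obtain ⟨y, hyU, hxy⟩ := Metric.mem_closure_iff.mp hxcl (d/240) (by linarith)
    rw [hUdef, Set.mem_iUnion₂] at hyU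
    obtain ⟨o, hoO, hyo⟩ := hyU
    rw [Metric.mem_ball] at hyo
    obtain ⟨s, hsS, hxs⟩ := ha x hxK
    have hos : dist o s ≤ 31*d/240 := by
      have h1 : dist o s ≤ dist o y + dist y x + dist x s := dist_triangle4 o y x s
      rw [dist_comm o y, dist_comm y x] at h1
      linarith
    have hrel : rel o s := hb o hoO.1 s hsS hos
    have hsO : s ∈ O := ⟨hsS, hoO.2.tail ⟨hoO.1, hsS, hrel⟩⟩
    rw [hUdef, Set.mem_iUnion₂]
    exact ⟨s, hsO, Metric.mem_ball.mpr hxs⟩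
  have hw₁O : w₁ ∈ O := ⟨hw₁, Relation.ReflTransGen.refl⟩
  have hw₁U : w₁ ∈ U := by
    rw [hUdef, Set.mem_iUnion₂]
    exact ⟨w₁, hw₁O, Metric.mem_ball_self (by linarith)⟩
  have hKU : K ⊆ U := by
    intro x hxK
    by_contra hxU
    have hxcl : x ∉ closure U := fun h => hxU (hclos ⟨hxK, h⟩)
    have hpre := hKpath.isConnected.isPreconnected
    have hcover : K ⊆ U ∪ (closure U)ᶜ := by
      intro z hz
      by_cases hzc : z ∈ closure U
      · exact Or.inl (hclos ⟨hz, hzc⟩)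
      · exact Or.inr hzc
    obtain ⟨p, hpK, hpU, hpc⟩ := hpre U (closure U)ᶜ hUopen isClosed_closure.isOpen_compl
      hcover ⟨w₁, hSK hw₁, hw₁U⟩ ⟨x, hxK, hxcl⟩
    exact hpc (subset_closure hpU)
  refine ⟨hKU, fun w hw => ?_⟩
  have hwU : w ∈ U := hKU (hSK hw)
  rw [hUdef, Set.mem_iUnion₂] at hwU
  obtain ⟨o, hoO, hwo⟩ := hwU
  rw [Metric.mem_ball] at hwo
  have hrel : rel o w := hb o hoO.1 w hw (by rw [dist_comm]; linarith)
  exact hoO.2.tail ⟨hoO.1, hw, hrel⟩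
end

section
/- Let a, b > 0 with a unit vector n ∈ ℝ³, let e¹, e² complete n to an orthonormal basis, let φ : ℝ² → ℝ with |∇φ| < 1/100, and let x_∂ = x⁰ + x₁e¹ + x₂e² − φ(x₁,x₂)n be a boundary point with x₁² + x₂² ≤ (d/8)², and y⁰ := x⁰ − (3d/4)n. Then (x_∂ − y⁰) · n(x_∂) ≥ ( (3d/4)·(1/√(|∇φ(x₁,x₂)|²+1)) − |x_∂ − x⁰| ) ≥ (5d/16), where n(x_∂) is the outward unit normal (∂₁φ, ∂₂φ, −1)-direction normalized; consequently the velocity v_{x_∂} := 2(x_∂ − y⁰)/T with 0 < T ≤ 𝔡 satisfies v_{x_∂} · n(x_∂) ≥ 5d/(8𝔡). -/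
set_option maxHeartbeats 1000000


open scoped RealInnerProductSpace

lemma inner_comb (n e₁ e₂ : EuclideanSpace ℝ (Fin 3))
    (hn : ‖n‖ = 1) (he₁ : ‖e₁‖ = 1) (he₂ : ‖e₂‖ = 1)
    (he₁e₂ : ⟪e₁, e₂⟫ = (0:ℝ)) (he₁n : ⟪e₁, n⟫ = (0:ℝ)) (he₂n : ⟪e₂, n⟫ = (0:ℝ))
    (a₁ a₂ a₃ b₁ b₂ b₃ : ℝ) :
    ⟪a₁ • e₁ + a₂ • e₂ + a₃ • n, b₁ • e₁ + b₂ • e₂ + b₃ • n⟫ = a₁*b₁ + a₂*b₂ + a₃*b₃ := by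
  have h1 : ⟪e₁, e₁⟫ = (1:ℝ) := by
    rw [real_inner_self_eq_norm_sq, he₁]; norm_num
  have h2 : ⟪e₂, e₂⟫ = (1:ℝ) := by
    rw [real_inner_self_eq_norm_sq, he₂]; norm_num
  have h3 : ⟪n, n⟫ = (1:ℝ) := by
    rw [real_inner_self_eq_norm_sq, hn]; norm_num
  have h4 : ⟪e₂, e₁⟫ = (0:ℝ) := by rw [real_inner_comm]; exact he₁e₂
  have h5 : ⟪n, e₁⟫ = (0:ℝ) := by rw [real_inner_comm]; exact he₁n
  have h6 : ⟪n, e₂⟫ = (0:ℝ) := by rw [real_inner_comm]; exact he₂n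
  simp only [inner_add_left, inner_add_right, real_inner_smul_left, real_inner_smul_right,
    h1, h2, h3, h4, h5, h6, he₁e₂, he₁n, he₂n]
  ring

/-- Outgoing-normal-component estimate of Proposition 4.1: with boundary point
`x_∂ = x⁰ + x₁e¹ + x₂e² − φ(x₁,x₂)n` (with `x₁² + x₂² ≤ (d/8)²`, `|∇φ| < 1/100`,
`φ(0,0) = 0`), anchor `y⁰ = x⁰ − (3d/4)n`, and outward unit normal
`N = (p₁e¹ + p₂e² + n)/√(p₁² + p₂² + 1)` where `pᵢ = ∂ᵢφ(x₁,x₂)`, one has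
`(x_∂ − y⁰)·N ≥ (3d/4)/√(p₁²+p₂²+1) − |x_∂ − x⁰| ≥ 5d/16`; consequently the
velocity `v = 2(x_∂ − y⁰)/T` with `0 < T ≤ 𝔡` satisfies `v·N ≥ 5d/(8𝔡)`. -/
theorem stmt18 (d 𝔡 T : ℝ) (hd : 0 < d) (h𝔡 : 0 < 𝔡) (hT0 : 0 < T) (hT : T ≤ 𝔡)
    (x₀ n e₁ e₂ : EuclideanSpace ℝ (Fin 3))
    (hn : ‖n‖ = 1) (he₁ : ‖e₁‖ = 1) (he₂ : ‖e₂‖ = 1)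
    (he₁e₂ : ⟪e₁, e₂⟫ = (0:ℝ)) (he₁n : ⟪e₁, n⟫ = (0:ℝ)) (he₂n : ⟪e₂, n⟫ = (0:ℝ))
    (φ : ℝ × ℝ → ℝ) (hφ : Differentiable ℝ φ) (hφ0 : φ (0, 0) = 0)
    (hgrad : ∀ p, ‖fderiv ℝ φ p‖ < 1/100)
    (x₁ x₂ : ℝ) (hx : x₁^2 + x₂^2 ≤ (d/8)^2) :
    let p₁ := fderiv ℝ φ (x₁, x₂) (1, 0)
    let p₂ := fderiv ℝ φ (x₁, x₂) (0, 1)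
    let xb := x₀ + x₁ • e₁ + x₂ • e₂ - φ (x₁, x₂) • n
    let y := x₀ - (3*d/4) • n
    let N := (Real.sqrt (p₁^2 + p₂^2 + 1))⁻¹ • (p₁ • e₁ + p₂ • e₂ + n)
    (3*d/4) / Real.sqrt (p₁^2 + p₂^2 + 1) - ‖xb - x₀‖ ≤ ⟪xb - y, N⟫ ∧
    5*d/16 ≤ ⟪xb - y, N⟫ ∧
    5*d/(8*𝔡) ≤ ⟪(2/T) • (xb - y), N⟫ := by
  intro p₁ p₂ xb y N
  have hp1def : p₁ = fderiv ℝ φ (x₁, x₂) (1, 0) := rfl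
  have hp2def : p₂ = fderiv ℝ φ (x₁, x₂) (0, 1) := rfl
  have hxbdef : xb = x₀ + x₁ • e₁ + x₂ • e₂ - φ (x₁, x₂) • n := rfl
  have hydef : y = x₀ - (3*d/4) • n := rfl
  have hNdef : N = (Real.sqrt (p₁^2 + p₂^2 + 1))⁻¹ • (p₁ • e₁ + p₂ • e₂ + n) := rfl
  clear_value p₁ p₂ xb y N
  set c := φ (x₁, x₂) with hc
  set s := Real.sqrt (p₁^2 + p₂^2 + 1) with hs
  -- basic bounds on p₁, p₂
  have hp₁ : |p₁| ≤ 1/100 := by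
    rw [hp1def]
    have := (fderiv ℝ φ (x₁, x₂)).le_opNorm (1, 0)
    have hnrm : ‖((1:ℝ), (0:ℝ))‖ = 1 := by
      simp [Prod.norm_def]
    rw [hnrm, mul_one] at this
    calc |fderiv ℝ φ (x₁, x₂) (1, 0)| = ‖fderiv ℝ φ (x₁, x₂) (1, 0)‖ := rfl
      _ ≤ ‖fderiv ℝ φ (x₁, x₂)‖ := this
      _ ≤ 1/100 := (hgrad _).le
  have hp₂ : |p₂| ≤ 1/100 := by
    rw [hp2def]
    have := (fderiv ℝ φ (x₁, x₂)).le_opNorm (0, 1)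
    have hnrm : ‖((0:ℝ), (1:ℝ))‖ = 1 := by
      simp [Prod.norm_def]
    rw [hnrm, mul_one] at this
    calc |fderiv ℝ φ (x₁, x₂) (0, 1)| = ‖fderiv ℝ φ (x₁, x₂) (0, 1)‖ := rfl
      _ ≤ ‖fderiv ℝ φ (x₁, x₂)‖ := this
      _ ≤ 1/100 := (hgrad _).le
  have hp₁sq : p₁^2 ≤ 1/10000 := by
    calc p₁^2 = |p₁|^2 := (sq_abs p₁).symm
      _ ≤ (1/100)^2 := pow_le_pow_left₀ (abs_nonneg _) hp₁ 2
      _ = 1/10000 := by norm_num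
  have hp₂sq : p₂^2 ≤ 1/10000 := by
    calc p₂^2 = |p₂|^2 := (sq_abs p₂).symm
      _ ≤ (1/100)^2 := pow_le_pow_left₀ (abs_nonneg _) hp₂ 2
      _ = 1/10000 := by norm_num
  have hsumnn : (0:ℝ) ≤ p₁^2 + p₂^2 + 1 := by positivity
  have hs2 : s^2 = p₁^2 + p₂^2 + 1 := Real.sq_sqrt hsumnn
  have hs1 : 1 ≤ s := by
    have h := Real.sqrt_le_sqrt (show (1:ℝ) ≤ p₁^2 + p₂^2 + 1 by
      linarith [sq_nonneg p₁, sq_nonneg p₂])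
    simpa [hs] using h
  have hs_pos : 0 < s := lt_of_lt_of_le one_pos hs1
  have hs_ub : s ≤ 101/100 := by
    rw [hs]
    have h : p₁^2 + p₂^2 + 1 ≤ (101/100)^2 := by linarith
    calc Real.sqrt (p₁^2 + p₂^2 + 1) ≤ Real.sqrt ((101/100)^2) := Real.sqrt_le_sqrt h
      _ = 101/100 := Real.sqrt_sq (by norm_num)
  -- bound on |c| = |φ(x₁,x₂)|
  have hx₁ : |x₁| ≤ d/8 := by
    have h1 : x₁^2 ≤ (d/8)^2 := by linarith [sq_nonneg x₂]
    calc |x₁| = Real.sqrt (x₁^2) := (Real.sqrt_sq_eq_abs x₁).symm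
      _ ≤ Real.sqrt ((d/8)^2) := Real.sqrt_le_sqrt h1
      _ = d/8 := Real.sqrt_sq (by positivity)
  have hx₂ : |x₂| ≤ d/8 := by
    have h1 : x₂^2 ≤ (d/8)^2 := by linarith [sq_nonneg x₁]
    calc |x₂| = Real.sqrt (x₂^2) := (Real.sqrt_sq_eq_abs x₂).symm
      _ ≤ Real.sqrt ((d/8)^2) := Real.sqrt_le_sqrt h1
      _ = d/8 := Real.sqrt_sq (by positivity)
  have hcb : |c| ≤ d/800 := by
    have hlip : ‖φ (x₁, x₂) - φ (0, 0)‖ ≤ (1/100) * ‖((x₁, x₂) : ℝ × ℝ) - (0, 0)‖ := by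
      apply (convex_univ : Convex ℝ (Set.univ : Set (ℝ × ℝ))).norm_image_sub_le_of_norm_fderiv_le
        (fun x _ => hφ x) (fun x _ => (hgrad x).le)
        (Set.mem_univ _) (Set.mem_univ _)
    rw [hφ0, sub_zero] at hlip
    have hnrm : ‖((x₁, x₂) : ℝ × ℝ) - (0, 0)‖ ≤ d/8 := by
      have heq : ((x₁, x₂) : ℝ × ℝ) - (0, 0) = (x₁, x₂) := by simp
      rw [heq, Prod.norm_def]
      simp only [Real.norm_eq_abs]
      exact max_le hx₁ hx₂
    calc |c| = ‖φ (x₁, x₂)‖ := rfl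
      _ ≤ (1/100) * (d/8) :=
          le_trans hlip (mul_le_mul_of_nonneg_left hnrm (by norm_num))
      _ = d/800 := by ring
  -- orthonormality facts
  have h1 : ⟪e₁, e₁⟫ = (1:ℝ) := by rw [real_inner_self_eq_norm_sq, he₁]; norm_num
  have h2 : ⟪e₂, e₂⟫ = (1:ℝ) := by rw [real_inner_self_eq_norm_sq, he₂]; norm_num
  have h3 : ⟪n, n⟫ = (1:ℝ) := by rw [real_inner_self_eq_norm_sq, hn]; norm_num
  have h4 : ⟪e₂, e₁⟫ = (0:ℝ) := by rw [real_inner_comm]; exact he₁e₂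
  have h5 : ⟪n, e₁⟫ = (0:ℝ) := by rw [real_inner_comm]; exact he₁n
  have h6 : ⟪n, e₂⟫ = (0:ℝ) := by rw [real_inner_comm]; exact he₂n
  -- decompositions
  have hxb_x₀ : xb - x₀ = x₁ • e₁ + x₂ • e₂ + (-c) • n := by
    rw [hxbdef, neg_smul]; abel
  have hxb_y : xb - y = x₁ • e₁ + x₂ • e₂ + (3*d/4 - c) • n := by
    rw [hxbdef, hydef, sub_smul]; abel
  -- inner product values
  have hIv : ⟪xb - x₀, p₁ • e₁ + p₂ • e₂ + n⟫ = x₁*p₁ + x₂*p₂ - c := by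
    rw [hxb_x₀]
    simp only [inner_add_left, inner_add_right, real_inner_smul_left, real_inner_smul_right,
      h1, h2, h3, h4, h5, h6, he₁e₂, he₁n, he₂n]
    ring
  have hVnorm : ‖p₁ • e₁ + p₂ • e₂ + n‖ = s := by
    have hsq : ‖p₁ • e₁ + p₂ • e₂ + n‖^2 = p₁^2 + p₂^2 + 1 := by
      rw [← real_inner_self_eq_norm_sq]
      simp only [inner_add_left, inner_add_right, real_inner_smul_left, real_inner_smul_right,
        h1, h2, h3, h4, h5, h6, he₁e₂, he₁n, he₂n]
      ring
    rw [hs, ← hsq, Real.sqrt_sq (norm_nonneg _)]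
  have hInner : ⟪xb - y, N⟫ = s⁻¹ * (x₁*p₁ + x₂*p₂ + (3*d/4 - c)) := by
    rw [hNdef, real_inner_smul_right, hxb_y]
    simp only [inner_add_left, inner_add_right, real_inner_smul_left, real_inner_smul_right,
      h1, h2, h3, h4, h5, h6, he₁e₂, he₁n, he₂n]
    ring
  -- norm of xb - x₀
  have hnormsq : ‖xb - x₀‖^2 = x₁^2 + x₂^2 + c^2 := by
    rw [← real_inner_self_eq_norm_sq, hxb_x₀]
    simp only [inner_add_left, inner_add_right, real_inner_smul_left, real_inner_smul_right,
      h1, h2, h3, h4, h5, h6, he₁e₂, he₁n, he₂n]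
    ring
  -- Cauchy–Schwarz
  have hCS : |x₁*p₁ + x₂*p₂ - c| ≤ ‖xb - x₀‖ * s := by
    rw [← hIv, ← hVnorm]
    exact abs_real_inner_le_norm _ _
  have hnorm_ub : ‖xb - x₀‖ ≤ 13*d/100 := by
    have hc2 : c^2 ≤ (d/800)^2 := by
      calc c^2 = |c|^2 := (sq_abs c).symm
        _ ≤ (d/800)^2 := pow_le_pow_left₀ (abs_nonneg _) hcb 2
    have h1 : ‖xb - x₀‖^2 ≤ (13*d/100)^2 := by
      rw [hnormsq]
      have e1 : ((d/8)^2 : ℝ) = d^2/64 := by ring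
      have e2 : ((d/800)^2 : ℝ) = d^2/640000 := by ring
      have e3 : ((13*d/100)^2 : ℝ) = 169*(d^2)/10000 := by ring
      rw [e1] at hx; rw [e2] at hc2; rw [e3]
      linarith [sq_nonneg d]
    calc ‖xb - x₀‖ = Real.sqrt (‖xb - x₀‖^2) := (Real.sqrt_sq (norm_nonneg _)).symm
      _ ≤ Real.sqrt ((13*d/100)^2) := Real.sqrt_le_sqrt h1
      _ = 13*d/100 := Real.sqrt_sq (by positivity)
  -- first inequality
  have key1 : (3*d/4) / s - ‖xb - x₀‖ ≤ ⟪xb - y, N⟫ := by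
    rw [hInner]
    have h1 : -(‖xb - x₀‖ * s) ≤ x₁*p₁ + x₂*p₂ - c := by
      have := abs_le.mp hCS
      linarith [this.1]
    have : (3*d/4) / s - ‖xb - x₀‖ = s⁻¹ * (3*d/4 - ‖xb - x₀‖ * s) := by
      field_simp
    rw [this]
    apply mul_le_mul_of_nonneg_left _ (by positivity)
    linarith
  -- second inequality
  have key2 : 5*d/16 ≤ ⟪xb - y, N⟫ := by
    refine le_trans ?_ key1
    have h1 : (3*d/4) / (101/100) ≤ (3*d/4) / s :=
      div_le_div_of_nonneg_left (by positivity) hs_pos hs_ub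
    have : (5:ℝ)*d/16 ≤ (3*d/4)/(101/100) - 13*d/100 := by
      have e : ((3*d/4)/(101/100) : ℝ) = 75*d/101 := by ring
      rw [e]
      linarith
    linarith
  refine ⟨key1, key2, ?_⟩
  -- third inequality
  have hpos : (0:ℝ) ≤ ⟪xb - y, N⟫ := le_trans (by positivity) key2
  rw [real_inner_smul_left]
  have h2T : 2/𝔡 ≤ 2/T := div_le_div_of_nonneg_left (by norm_num) hT0 hT
  calc 5*d/(8*𝔡) = (2/𝔡) * (5*d/16) := by field_simp; ring
    _ ≤ (2/T) * (5*d/16) := mul_le_mul_of_nonneg_right h2T (by positivity)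
    _ ≤ (2/T) * ⟪xb - y, N⟫ := by
        apply mul_le_mul_of_nonneg_left key2 (by positivity)
end
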